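/- arXiv:1911.04603 — 2 statements merged into one kernel-verified Lean document; each statement's English description precedes it below -/
import Mathlib

section
/- Let G be the graph with vertex set {v_s} ∪ (V_1 ∪ ... ∪ V_k) where each V_i has 5 vertices and {v_s} ∪ V_i induces a complete graph K6, with no other edges. Then G has n = 5k + 1 vertices, minimum degree 5, and every matching of G has size at most (2n + 3)/5. -/
/-! Deleting the apex leaves `k` disjoint copies of `K₅`. An edge of a matching either contains
the apex, and there is at most one such edge, or lies inside one `K₅`, whose five vertices carry at
most two disjoint edges. So a matching has at most `2k + 1 = (2n + 3)/5` edges. -/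

open SimpleGraph

/-- Number of odd connected components of the graph induced on the complement of `S`. -/
noncomputable def oddComp {V : Type*} (G : SimpleGraph V) (S : Set V) : ℕ :=
  Nat.card {c : (G.induce Sᶜ).ConnectedComponent // Odd (Nat.card c.supp)}

/-- A 1-planar drawing of a graph: vertices are points in the plane, edges are
simple curves between their endpoints avoiding other vertices, and every edge
contains at most one crossing point with other edges. -/
structure OnePlanarDrawing {V : Type*} (G : SimpleGraph V) where
  vert : V → ℝ × ℝ
  vert_inj : Function.Injective vert
  curve : G.edgeSet → ℝ → ℝ × ℝ
  curve_cont : ∀ e, ContinuousOn (curve e) (Set.Icc 0 1)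
  curve_inj : ∀ e, Set.InjOn (curve e) (Set.Icc 0 1)
  curve_ends : ∀ (e : G.edgeSet) (u v : V), (e : Sym2 V) = s(u, v) →
    ({curve e 0, curve e 1} : Set (ℝ × ℝ)) = {vert u, vert v}
  interior_avoid : ∀ (e : G.edgeSet), ∀ t ∈ Set.Ioo (0:ℝ) 1, ∀ v, curve e t ≠ vert v
  one_cross : ∀ e : G.edgeSet,
    Set.Subsingleton {p : ℝ × ℝ | ∃ f : G.edgeSet, f ≠ e ∧
      p ∈ curve e '' Set.Ioo (0:ℝ) 1 ∧ p ∈ curve f '' Set.Ioo (0:ℝ) 1}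

/-- A graph is 1-planar if it admits a 1-planar drawing. -/
def OnePlanar {V : Type*} (G : SimpleGraph V) : Prop := Nonempty (OnePlanarDrawing G)

/-- An edge is crossed in a drawing if its interior meets the interior of another edge. -/
def OnePlanarDrawing.Crossed {V : Type*} {G : SimpleGraph V} (D : OnePlanarDrawing G)
    (e : G.edgeSet) : Prop :=
  ∃ f : G.edgeSet, f ≠ e ∧
    (D.curve e '' Set.Ioo (0:ℝ) 1 ∩ D.curve f '' Set.Ioo (0:ℝ) 1).Nonempty

/-- One apex vertex joined to `k` disjoint groups of five vertices, where the apex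
together with each group induces a `K₆`; vertices in different groups are non-adjacent. -/
def apexK6 (k : ℕ) : SimpleGraph (Unit ⊕ Fin k × Fin 5) :=
  SimpleGraph.fromRel (fun a b => ∀ i j x y, a = Sum.inr (i, x) → b = Sum.inr (j, y) → i = j)

namespace SimpleGraph.Subgraph.IsMatching

variable {V : Type*} {G : SimpleGraph V} {M : G.Subgraph}

lemma eq_of_mem_edgeSet_of_mem (hM : M.IsMatching) {e f : Sym2 V} (he : e ∈ M.edgeSet)
    (hf : f ∈ M.edgeSet) {v : V} (hve : v ∈ e) (hvf : v ∈ f) : e = f := by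
  obtain ⟨w, rfl⟩ := Sym2.mem_iff_exists.mp hve
  obtain ⟨w', rfl⟩ := Sym2.mem_iff_exists.mp hvf
  rw [hM.eq_of_adj_left (v := w) he hf]

/-- Double counting: each edge of `M` inside `s` covers two vertices of `s`, and each vertex
lies on at most one edge of `M`. -/
lemma two_mul_ncard_edgeSet_inter_sym2_le [Finite V] (hM : M.IsMatching) (s : Set V) :
    2 * (M.edgeSet ∩ s.sym2).ncard ≤ s.ncard := by
  classical
  have := Fintype.ofFinite V
  rw [Set.ncard_eq_toFinset_card', Set.ncard_eq_toFinset_card', mul_comm,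
    ← mul_one s.toFinset.card]
  refine Finset.card_mul_le_card_mul (fun (e : Sym2 V) v => v ∈ e) ?_ ?_
  · intro e he
    induction e using Sym2.inductionOn with
    | _ a b =>
    simp only [Set.mem_toFinset, Set.mem_inter_iff, Subgraph.mem_edgeSet,
      Set.mk_mem_sym2_iff] at he
    obtain ⟨hab, ha, hb⟩ := he
    calc 2 = ({a, b} : Finset V).card := (Finset.card_pair hab.ne).symm
      _ ≤ _ := Finset.card_le_card fun x hx => by
        simp only [Finset.mem_insert, Finset.mem_singleton] at hx
        rcases hx with rfl | rfl <;> simp [Finset.mem_bipartiteAbove, ha, hb]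
  · intro v _
    refine Finset.card_le_one.mpr fun e he f hf => ?_
    simp only [Finset.mem_bipartiteBelow, Set.mem_toFinset] at he hf
    exact hM.eq_of_mem_edgeSet_of_mem he.1.1 hf.1.1 he.2 hf.2

end SimpleGraph.Subgraph.IsMatching

def apexK6Group (k : ℕ) (i : Fin k) : Set (Unit ⊕ Fin k × Fin 5) :=
  Set.range fun x => Sum.inr (i, x)

lemma apexK6_adj_inl_inr (k : ℕ) (p : Fin k × Fin 5) :
    (apexK6 k).Adj (Sum.inl ()) (Sum.inr p) := by
  simp [apexK6]

lemma apexK6_adj_inr_inr {k : ℕ} {i j : Fin k} {x y : Fin 5} :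
    (apexK6 k).Adj (Sum.inr (i, x)) (Sum.inr (j, y)) ↔ i = j ∧ x ≠ y := by
  simp only [apexK6, fromRel_adj]
  grind

lemma apex_mem_or_mem_sym2_apexK6Group {k : ℕ} {e : Sym2 (Unit ⊕ Fin k × Fin 5)}
    (he : e ∈ (apexK6 k).edgeSet) : Sum.inl () ∈ e ∨ ∃ i, e ∈ (apexK6Group k i).sym2 := by
  induction e using Sym2.inductionOn with
  | _ a b =>
  rcases a with ⟨⟩ | ⟨i, x⟩ <;> rcases b with ⟨⟩ | ⟨j, y⟩
  · simp
  · simp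
  · simp
  · obtain ⟨rfl, -⟩ := apexK6_adj_inr_inr.mp he
    exact Or.inr ⟨i, by simp [apexK6Group]⟩

lemma ncard_apexK6Group (k : ℕ) (i : Fin k) : (apexK6Group k i).ncard = 5 := by
  rw [apexK6Group, Set.ncard_range_of_injective fun x y h => by simpa using h]
  simp

lemma neighborSet_apexK6_inl (k : ℕ) :
    (apexK6 k).neighborSet (Sum.inl ()) = Set.range Sum.inr := by
  ext (⟨⟩ | p) <;> simp [apexK6_adj_inl_inr]

lemma neighborSet_apexK6_inr {k : ℕ} (i : Fin k) (x : Fin 5) :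
    (apexK6 k).neighborSet (Sum.inr (i, x)) =
      insert (Sum.inl ()) ((fun y => Sum.inr (i, y)) '' {x}ᶜ) := by
  ext (⟨⟩ | ⟨j, y⟩)
  · simp [(apexK6_adj_inl_inr k (i, x)).symm]
  · simp only [mem_neighborSet, apexK6_adj_inr_inr]
    grind

lemma card_neighborSet_apexK6_inl (k : ℕ) :
    Nat.card ((apexK6 k).neighborSet (Sum.inl ())) = 5 * k := by
  rw [neighborSet_apexK6_inl, Nat.card_range_of_injective Sum.inr_injective]
  simp [mul_comm]

lemma card_neighborSet_apexK6_inr {k : ℕ} (i : Fin k) (x : Fin 5) :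
    Nat.card ((apexK6 k).neighborSet (Sum.inr (i, x))) = 5 := by
  rw [Nat.card_coe_set_eq, neighborSet_apexK6_inr, Set.ncard_insert_of_notMem (by simp),
    Set.ncard_image_of_injective _ fun y z h => by simpa using h, Set.ncard_compl]
  simp

lemma ncard_edgeSet_le_of_isMatching_apexK6 {k : ℕ} {M : (apexK6 k).Subgraph}
    (hM : M.IsMatching) : M.edgeSet.ncard ≤ 2 * k + 1 := by
  have hcover : M.edgeSet ⊆
      {e ∈ M.edgeSet | Sum.inl () ∈ e} ∪ ⋃ i, M.edgeSet ∩ (apexK6Group k i).sym2 := by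
    intro e he
    rcases apex_mem_or_mem_sym2_apexK6Group (M.edgeSet_subset he) with hapex | ⟨i, hi⟩
    · exact Or.inl ⟨he, hapex⟩
    · exact Or.inr (Set.mem_iUnion.mpr ⟨i, he, hi⟩)
  have hapex : {e ∈ M.edgeSet | Sum.inl () ∈ e}.ncard ≤ 1 :=
    (Set.ncard_le_one).mpr fun e he f hf => hM.eq_of_mem_edgeSet_of_mem he.1 hf.1 he.2 hf.2
  have hgroup (i : Fin k) : (M.edgeSet ∩ (apexK6Group k i).sym2).ncard ≤ 2 := by
    have := hM.two_mul_ncard_edgeSet_inter_sym2_le (apexK6Group k i)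
    rw [ncard_apexK6Group] at this
    omega
  calc M.edgeSet.ncard
      ≤ {e ∈ M.edgeSet | Sum.inl () ∈ e}.ncard +
          (⋃ i, M.edgeSet ∩ (apexK6Group k i).sym2).ncard :=
        (Set.ncard_le_ncard hcover).trans (Set.ncard_union_le _ _)
    _ ≤ 1 + ∑ i : Fin k, (M.edgeSet ∩ (apexK6Group k i).sym2).ncard :=
        add_le_add hapex (Set.ncard_iUnion_le_of_fintype _)
    _ ≤ 1 + ∑ _i : Fin k, 2 := by gcongr with i; exact hgroup i
    _ = 2 * k + 1 := by simp [mul_comm, add_comm]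

theorem stmt8 (k : ℕ) (hk : 1 ≤ k) :
    Fintype.card (Unit ⊕ Fin k × Fin 5) = 5 * k + 1 ∧
    (∀ v, 5 ≤ Nat.card ((apexK6 k).neighborSet v)) ∧
    (∃ v, Nat.card ((apexK6 k).neighborSet v) = 5) ∧
    ∀ M : (apexK6 k).Subgraph, M.IsMatching →
      (M.edgeSet.ncard : ℚ) ≤ (2 * ((5 * k + 1 : ℕ) : ℚ) + 3) / 5 := by
  refine ⟨by simp [add_comm, mul_comm], ?_,
    ⟨Sum.inr (⟨0, hk⟩, 0), card_neighborSet_apexK6_inr _ _⟩, fun M hM => ?_⟩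
  · rintro (⟨⟩ | ⟨i, x⟩)
    · rw [card_neighborSet_apexK6_inl]; omega
    · rw [card_neighborSet_apexK6_inr]
  · calc (M.edgeSet.ncard : ℚ) ≤ (2 * k + 1 : ℕ) := by
          exact_mod_cast ncard_edgeSet_le_of_isMatching_apexK6 hM
      _ = (2 * ((5 * k + 1 : ℕ) : ℚ) + 3) / 5 := by push_cast; ring
end

section
/- For every N there exists a simple 1-planar graph G with minimum degree 7 and n ≥ N vertices such that every matching of G has size at most (11n + 12)/23. -/
open SimpleGraph

/-!
Take a straight-line 1-planar drawing of a 7-regular graph `H` on 24 vertices with one vertex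
at the origin and all others in the open cone `0 < y < x`. Glue `k` copies of `H` along that
vertex, drawing copy `i` with the shear `(x, y) ↦ (x, i x + y)`: the shears map the cone onto
pairwise disjoint cones, so edges of different copies never meet and the drawing stays
1-planar. The result has `n = 23 k + 1` vertices and minimum degree 7. Deleting the shared
vertex leaves `k` blocks of 23 vertices each, so a matching has at most one edge through it
and at most 11 edges inside each block: at most `11 k + 1 = (11 n + 12) / 23` edges.
-/

open Function

namespace SimpleGraph

variable {V W : Type*} {G : SimpleGraph V} {G' : SimpleGraph W}

theorem _root_.OnePlanar.map_iso (φ : G ≃g G') (h : OnePlanar G) : OnePlanar G' := by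
  obtain ⟨D⟩ := h
  exact ⟨{ vert := D.vert ∘ φ.symm
           vert_inj := D.vert_inj.comp φ.symm.injective
           curve := fun e => D.curve (φ.symm.mapEdgeSet e)
           curve_cont := fun e => D.curve_cont _
           curve_inj := fun e => D.curve_inj _
           curve_ends := fun e u v he => D.curve_ends _ (φ.symm u) (φ.symm v) (by
             simp [Iso.mapEdgeSet, he])
           interior_avoid := fun e t ht v => D.interior_avoid _ t ht _
           one_cross := fun e => (D.one_cross (φ.symm.mapEdgeSet e)).anti
             fun _ ⟨f, hfe, hpe, hpf⟩ =>
               ⟨φ.symm.mapEdgeSet f, φ.symm.mapEdgeSet.injective.ne hfe, hpe, hpf⟩ }⟩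

theorem Iso.card_neighborSet (φ : G ≃g G') (v : V) :
    Nat.card (G'.neighborSet (φ v)) = Nat.card (G.neighborSet v) :=
  (Nat.card_congr (φ.toEquiv.subtypeEquiv fun _ => φ.map_adj_iff.symm)).symm

theorem Iso.ncard_edgeSet_map (φ : G ≃g G') (M : G.Subgraph) :
    (M.map φ.toHom).edgeSet.ncard = M.edgeSet.ncard := by
  rw [Subgraph.edgeSet_map]
  exact Set.ncard_image_of_injective _ (Sym2.map.injective φ.injective)

namespace Subgraph.IsMatching

variable {M : G.Subgraph}

theorem eq_of_mem_edgeSet (hM : M.IsMatching) {v : V} {e f : Sym2 V} (he : e ∈ M.edgeSet)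
    (hf : f ∈ M.edgeSet) (hve : v ∈ e) (hvf : v ∈ f) : e = f := by
  obtain ⟨w, rfl⟩ := Sym2.mem_iff_exists.mp hve
  obtain ⟨w', rfl⟩ := Sym2.mem_iff_exists.mp hvf
  rw [hM.eq_of_adj_left (M.mem_edgeSet.mp he) (M.mem_edgeSet.mp hf)]

theorem two_mul_ncard_le (hM : M.IsMatching) {E : Set (Sym2 V)} (hE : E ⊆ M.edgeSet)
    {s : Set V} (hs : s.Finite) (hEs : ∀ e ∈ E, ∀ v ∈ e, v ∈ s) : 2 * E.ncard ≤ s.ncard := by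
  let endpoint : Bool × Sym2 V → V := fun be => if be.1 then be.2.out.1 else be.2.out.2
  have endpoint_mem : ∀ be, endpoint be ∈ be.2 := fun ⟨b, e⟩ => by
    cases b
    exacts [e.out_snd_mem, e.out_fst_mem]
  calc 2 * E.ncard = ((Set.univ : Set Bool) ×ˢ E).ncard := by simp [Set.ncard_prod]
    _ ≤ s.ncard := Set.ncard_le_ncard_of_injOn endpoint
        (fun be hbe => hEs _ hbe.2 _ (endpoint_mem be)) ?_ hs
  rintro ⟨b, e⟩ ⟨-, he⟩ ⟨b', e'⟩ ⟨-, he'⟩ h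
  obtain rfl : e = e' := hM.eq_of_mem_edgeSet (hE he) (hE he') (endpoint_mem (b, e))
    (by rw [h]; exact endpoint_mem (b', e'))
  have hloop : e.out.1 ≠ e.out.2 := by
    have := M.edgeSet_subset (hE he)
    rw [← e.out_eq] at this
    exact G.ne_of_adj this
  cases b <;> cases b' <;> simp only [endpoint, Bool.false_eq_true, if_false, if_true] at h
  · rfl
  · exact absurd h.symm hloop
  · exact absurd h hloop
  · rfl

end Subgraph.IsMatching

def edgeSegment (p : V → ℝ × ℝ) : Sym2 V → Set (ℝ × ℝ) :=
  Sym2.lift ⟨fun u v => openSegment ℝ (p u) (p v), fun _ _ => openSegment_symm ℝ _ _⟩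

@[simp] theorem edgeSegment_mk (p : V → ℝ × ℝ) (u v : V) :
    edgeSegment p s(u, v) = openSegment ℝ (p u) (p v) := rfl

def crossings (G : SimpleGraph V) (p : V → ℝ × ℝ) (e : Sym2 V) : Set (ℝ × ℝ) :=
  {z | ∃ f ∈ G.edgeSet, f ≠ e ∧ z ∈ edgeSegment p e ∧ z ∈ edgeSegment p f}

structure IsStraightLineOnePlanar (G : SimpleGraph V) (p : V → ℝ × ℝ) : Prop where
  injective : Injective p
  notMem_edgeSegment : ∀ e ∈ G.edgeSet, ∀ w, p w ∉ edgeSegment p e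
  crossings_subsingleton : ∀ e ∈ G.edgeSet, (G.crossings p e).Subsingleton

theorem IsStraightLineOnePlanar.onePlanar {p : V → ℝ × ℝ} (h : G.IsStraightLineOnePlanar p) :
    OnePlanar G := by
  have hne (e : G.edgeSet) : p (e : Sym2 V).out.1 ≠ p (e : Sym2 V).out.2 := by
    refine h.injective.ne (G.ne_of_adj ?_)
    rw [← mem_edgeSet, Sym2.mk, Quot.out_eq]
    exact e.2
  have himage (e : G.edgeSet) : AffineMap.lineMap (p (e : Sym2 V).out.1) (p (e : Sym2 V).out.2) ''
      Set.Ioo (0 : ℝ) 1 = edgeSegment p e := by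
    conv_rhs => rw [← Quot.out_eq (e : Sym2 V)]
    exact (openSegment_eq_image_lineMap ℝ _ _).symm
  refine ⟨{ vert := p
            vert_inj := h.injective
            curve := fun e => AffineMap.lineMap (p (e : Sym2 V).out.1) (p (e : Sym2 V).out.2)
            curve_cont := fun e => AffineMap.lineMap_continuous.continuousOn
            curve_inj := fun e => (AffineMap.lineMap_injective ℝ (hne e)).injOn
            curve_ends := fun e u v he => ?_
            interior_avoid := fun e t ht v hv =>
              h.notMem_edgeSegment e e.2 v (himage e ▸ ⟨t, ht, hv⟩)
            one_cross := fun e => (h.crossings_subsingleton e e.2).anti ?_ }⟩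
  · rw [AffineMap.lineMap_apply_zero, AffineMap.lineMap_apply_one]
    have hends : s((e : Sym2 V).out.1, (e : Sym2 V).out.2) = s(u, v) := (Quot.out_eq _).trans he
    rcases Sym2.eq_iff.mp hends with ⟨hu, hv⟩ | ⟨hu, hv⟩
    · rw [hu, hv]
    · rw [hu, hv, Set.pair_comm]
  · rintro z ⟨f, hfe, hze, hzf⟩
    exact ⟨f, f.2, Subtype.coe_injective.ne hfe, himage e ▸ hze, himage f ▸ hzf⟩

end SimpleGraph

def cone : Set (ℝ × ℝ) := {q | 0 < q.2 ∧ q.2 < q.1}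

theorem openSegment_subset_cone {a b : ℝ × ℝ} (ha : a ∈ insert 0 cone) (hb : b ∈ insert 0 cone)
    (hab : a ≠ b) : openSegment ℝ a b ⊆ cone := by
  rintro _ ⟨s, t, hs, ht, -, rfl⟩
  rcases ha with rfl | ⟨ha₁, ha₂⟩ <;> rcases hb with rfl | ⟨hb₁, hb₂⟩
  · exact absurd rfl hab
  all_goals
    simp only [cone, Set.mem_ofPred_eq, smul_zero, zero_add, add_zero, Prod.fst_add, Prod.snd_add,
      Prod.smul_fst, Prod.smul_snd, smul_eq_mul]
    constructor <;> nlinarith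

def shear (t : ℝ) : ℝ × ℝ →ₗ[ℝ] ℝ × ℝ :=
  (LinearMap.fst ℝ ℝ ℝ).prod (t • LinearMap.fst ℝ ℝ ℝ + LinearMap.snd ℝ ℝ ℝ)

@[simp] theorem shear_apply (t : ℝ) (q : ℝ × ℝ) : shear t q = (q.1, t * q.1 + q.2) := rfl

theorem shear_injective (t : ℝ) : Injective (shear t) := fun q q' h => by
  simp only [shear_apply, Prod.mk.injEq] at h
  exact Prod.ext h.1 (by linarith [h.1 ▸ h.2])

theorem zero_notMem_shear_cone (t : ℝ) : (0 : ℝ × ℝ) ∉ shear t '' cone := by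
  rintro ⟨q, ⟨hq₂, hq₁⟩, hq⟩
  have : q.1 = 0 := congrArg Prod.fst hq
  linarith

theorem eq_of_mem_shear_cone {s t : ℤ} {z : ℝ × ℝ} (hs : z ∈ shear s '' cone)
    (ht : z ∈ shear t '' cone) : s = t := by
  obtain ⟨q, ⟨hq₂, hq₁⟩, rfl⟩ := hs
  obtain ⟨q', ⟨hq₂', hq₁'⟩, h⟩ := ht
  simp only [shear_apply, Prod.mk.injEq] at h
  obtain ⟨h₁, h₂⟩ := h
  rw [h₁] at h₂ hq₁'
  -- `(s - t) q₁ = q₂' - q₂` lies strictly between `-q₁` and `q₁`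
  have hlt : ((s - t : ℤ) : ℝ) * q.1 < 1 * q.1 := by push_cast; linarith
  have hgt : (-1) * q.1 < ((s - t : ℤ) : ℝ) * q.1 := by push_cast; linarith
  have h₁ : ((s - t : ℤ) : ℝ) < 1 := lt_of_mul_lt_mul_right hlt (by linarith)
  have h₂ : (-1 : ℝ) < ((s - t : ℤ) : ℝ) := lt_of_mul_lt_mul_right hgt (by linarith)
  have : s - t < 1 := by exact_mod_cast h₁
  have : -1 < s - t := by exact_mod_cast h₂
  omega

namespace SimpleGraph

variable {β ι : Type*}

def wedgeInclusion (i : ι) : Option β ↪ Option (ι × β) := (Embedding.sectR i β).optionMap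

@[simp] theorem wedgeInclusion_none (i : ι) : wedgeInclusion i (none : Option β) = none := rfl

@[simp] theorem wedgeInclusion_some (i : ι) (b : β) : wedgeInclusion i (some b) = some (i, b) :=
  rfl

/-- Copies of `H` indexed by `ι`, glued along the vertex `none`; vertex `b` of copy `i` is
`some (i, b)`. -/
def wedge (H : SimpleGraph (Option β)) (ι : Type*) : SimpleGraph (Option (ι × β)) :=
  ⨆ i : ι, H.map (wedgeInclusion i)

variable {H : SimpleGraph (Option β)}

theorem mem_edgeSet_wedge {e : Sym2 (Option (ι × β))} :
    e ∈ (H.wedge ι).edgeSet ↔ ∃ i, ∃ e' ∈ H.edgeSet, Sym2.map (wedgeInclusion i) e' = e := by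
  simp [wedge, edgeSet_iSup, edgeSet_map]

theorem neighborSet_wedge_some (i : ι) (b : β) :
    (H.wedge ι).neighborSet (some (i, b)) = wedgeInclusion i '' H.neighborSet (some b) := by
  ext y
  simp only [mem_neighborSet, wedge, iSup_adj, map_adj, Set.mem_image]
  constructor
  · rintro ⟨j, u, v, huv, hu, rfl⟩
    cases u with
    | none => simp at hu
    | some u =>
      simp only [wedgeInclusion_some, Option.some.injEq, Prod.mk.injEq] at hu
      obtain ⟨rfl, rfl⟩ := hu
      exact ⟨v, huv, rfl⟩
  · rintro ⟨v, huv, rfl⟩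
    exact ⟨i, some b, v, huv, rfl, rfl⟩

theorem card_neighborSet_wedge_some (i : ι) (b : β) :
    Nat.card ((H.wedge ι).neighborSet (some (i, b))) = Nat.card (H.neighborSet (some b)) := by
  rw [neighborSet_wedge_some, Nat.card_image_of_injective (wedgeInclusion i).injective]

theorem card_neighborSet_le_wedge_none [Finite ι] [Finite β] (i : ι) :
    Nat.card (H.neighborSet none) ≤ Nat.card ((H.wedge ι).neighborSet none) := by
  rw [← Nat.card_image_of_injective (wedgeInclusion i).injective]
  refine Nat.card_mono (Set.toFinite _) ?_
  rintro _ ⟨v, hv, rfl⟩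
  exact (le_iSup (fun i => H.map (wedgeInclusion i)) i) (map_adj_apply.mpr hv)

theorem ncard_edgeSet_le_of_isMatching_wedge [Fintype ι] [Fintype β]
    {M : (H.wedge ι).Subgraph} (hM : M.IsMatching) :
    M.edgeSet.ncard ≤ 1 + Fintype.card ι * (Fintype.card β / 2) := by
  let block (i : ι) : Set (Option (ι × β)) := Set.range fun b => some (i, b)
  have hcover : M.edgeSet ⊆
      {e ∈ M.edgeSet | none ∈ e} ∪ ⋃ i, {e ∈ M.edgeSet | ∀ x ∈ e, x ∈ block i} := by
    intro e he
    obtain ⟨i, e', -, rfl⟩ := mem_edgeSet_wedge.mp (M.edgeSet_subset he)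
    by_cases hnone : none ∈ Sym2.map (wedgeInclusion i) e'
    · exact Or.inl ⟨he, hnone⟩
    refine Or.inr (Set.mem_iUnion.mpr ⟨i, he, fun x hx => ?_⟩)
    obtain ⟨_ | b, -, rfl⟩ := Sym2.mem_map.mp hx
    · exact absurd hx hnone
    · exact ⟨b, rfl⟩
  have hapex : {e ∈ M.edgeSet | none ∈ e}.ncard ≤ 1 :=
    Set.ncard_le_one_iff_subsingleton.mpr fun e he f hf =>
      hM.eq_of_mem_edgeSet he.1 hf.1 he.2 hf.2
  have hblock (i : ι) : {e ∈ M.edgeSet | ∀ x ∈ e, x ∈ block i}.ncard ≤ Fintype.card β / 2 := by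
    rw [Nat.le_div_iff_mul_le two_pos, mul_comm]
    have hcard : (block i).ncard = Fintype.card β :=
      (Set.ncard_range_of_injective fun b b' h => by simpa using h).trans Nat.card_eq_fintype_card
    exact hcard ▸ hM.two_mul_ncard_le (fun e he => he.1) (Set.toFinite _) fun e he => he.2
  calc M.edgeSet.ncard
      ≤ {e ∈ M.edgeSet | none ∈ e}.ncard
        + (⋃ i, {e ∈ M.edgeSet | ∀ x ∈ e, x ∈ block i}).ncard :=
        (Set.ncard_le_ncard hcover (Set.toFinite _)).trans (Set.ncard_union_le _ _)
    _ ≤ 1 + ∑ _i : ι, Fintype.card β / 2 := add_le_add hapex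
        ((Set.ncard_iUnion_le_of_fintype _).trans (Finset.sum_le_sum fun i _ => hblock i))
    _ = 1 + Fintype.card ι * (Fintype.card β / 2) := by simp

variable {p : Option β → ℝ × ℝ}

def wedgePos (p : Option β → ℝ × ℝ) (c : ι → ℤ) : Option (ι × β) → ℝ × ℝ
  | none => 0
  | some (i, b) => shear (c i) (p (some b))

theorem wedgePos_wedgeInclusion (h0 : p none = 0) (c : ι → ℤ) (i : ι) (v : Option β) :
    wedgePos p c (wedgeInclusion i v) = shear (c i) (p v) := by
  cases v
  · simp only [wedgeInclusion_none, wedgePos, h0, map_zero]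
  · rfl

theorem edgeSegment_map_wedgeInclusion (h0 : p none = 0) (c : ι → ℤ) (i : ι)
    (e : Sym2 (Option β)) :
    edgeSegment (wedgePos p c) (Sym2.map (wedgeInclusion i) e) =
      shear (c i) '' edgeSegment p e := by
  induction e using Sym2.ind with
  | _ u v =>
    simp only [Sym2.map_mk, edgeSegment_mk, wedgePos_wedgeInclusion h0]
    exact (image_openSegment ℝ (shear (c i)).toAffineMap _ _).symm

theorem IsStraightLineOnePlanar.edgeSegment_subset_cone (hp : H.IsStraightLineOnePlanar p)
    (h0 : p none = 0) (hcone : ∀ b, p (some b) ∈ cone) {e : Sym2 (Option β)}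
    (he : e ∈ H.edgeSet) : edgeSegment p e ⊆ cone := by
  induction e using Sym2.ind with
  | _ u v =>
    have hmem : ∀ w, p w ∈ insert 0 cone := by
      rintro (_ | b)
      exacts [Or.inl h0, Or.inr (hcone b)]
    exact openSegment_subset_cone (hmem u) (hmem v) (hp.injective.ne (H.ne_of_adj he))

theorem IsStraightLineOnePlanar.wedge (hp : H.IsStraightLineOnePlanar p) (h0 : p none = 0)
    (hcone : ∀ b, p (some b) ∈ cone) {c : ι → ℤ} (hc : Injective c) :
    (H.wedge ι).IsStraightLineOnePlanar (wedgePos p c) := by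
  have hsome (i : ι) (b : β) : wedgePos p c (some (i, b)) ∈ shear (c i) '' cone :=
    Set.mem_image_of_mem _ (hcone b)
  have hsegment {i : ι} {e : Sym2 (Option β)} (he : e ∈ H.edgeSet) :
      edgeSegment (wedgePos p c) (Sym2.map (wedgeInclusion i) e) ⊆ shear (c i) '' cone := by
    rw [edgeSegment_map_wedgeInclusion h0]
    exact Set.image_mono (hp.edgeSegment_subset_cone h0 hcone he)
  refine ⟨?_, ?_, ?_⟩
  · rintro (_ | ⟨i, b⟩) (_ | ⟨j, b'⟩) h
    · rfl
    · exact absurd (h ▸ hsome j b') (zero_notMem_shear_cone _)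
    · exact absurd (h.symm ▸ hsome i b) (zero_notMem_shear_cone _)
    · obtain rfl : i = j := hc (eq_of_mem_shear_cone (hsome i b) (h ▸ hsome j b'))
      obtain rfl : b = b' := Option.some_injective _ (hp.injective (shear_injective _ h))
      rfl
  · intro e he w hw
    obtain ⟨i, e', he', rfl⟩ := mem_edgeSet_wedge.mp he
    rcases w with _ | ⟨j, b⟩
    · exact zero_notMem_shear_cone _ (hsegment he' hw)
    · obtain rfl : j = i := hc (eq_of_mem_shear_cone (hsome j b) (hsegment he' hw))
      rw [edgeSegment_map_wedgeInclusion h0] at hw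
      exact hp.notMem_edgeSegment e' he' (some b) ((shear_injective _).mem_set_image.mp hw)
  · intro e he
    obtain ⟨i, e', he', rfl⟩ := mem_edgeSet_wedge.mp he
    refine ((hp.crossings_subsingleton e' he').image (shear (c i))).anti ?_
    rintro z ⟨f, hf, hfe, hze, hzf⟩
    obtain ⟨j, f', hf', rfl⟩ := mem_edgeSet_wedge.mp hf
    obtain rfl : j = i := hc (eq_of_mem_shear_cone (hsegment hf' hzf) (hsegment he' hze))
    rw [edgeSegment_map_wedgeInclusion h0] at hze hzf
    obtain ⟨y, hy, rfl⟩ := hze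
    exact ⟨y, ⟨f', hf', fun h => hfe (h ▸ rfl), hy, (shear_injective _).mem_set_image.mp hzf⟩, rfl⟩

end SimpleGraph

def orient {R : Type*} [CommRing R] (a b c : R × R) : R :=
  (b.1 - a.1) * (c.2 - a.2) - (b.2 - a.2) * (c.1 - a.1)

theorem orient_add_smul (a b c d : ℝ × ℝ) {s t : ℝ} (hst : s + t = 1) :
    orient a b (s • c + t • d) = s * orient a b c + t * orient a b d := by
  simp only [orient, Prod.fst_add, Prod.snd_add, Prod.smul_fst, Prod.smul_snd, smul_eq_mul]
  linear_combination ((b.1 - a.1) * a.2 - (b.2 - a.2) * a.1) * hst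

theorem orient_eq_zero_of_mem_openSegment {a b z : ℝ × ℝ} (hz : z ∈ openSegment ℝ a b) :
    orient a b z = 0 := by
  obtain ⟨s, t, -, -, hst, rfl⟩ := hz
  rw [orient_add_smul a b a b hst]
  simp only [orient]
  ring

theorem disjoint_openSegment_of_orient {a b c d : ℝ × ℝ} (hmul : 0 ≤ orient a b c * orient a b d)
    (hadd : orient a b c + orient a b d ≠ 0) :
    Disjoint (openSegment ℝ a b) (openSegment ℝ c d) := by
  rw [Set.disjoint_left]
  rintro z hz ⟨s, t, hs, ht, hst, rfl⟩
  have h := orient_eq_zero_of_mem_openSegment hz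
  rw [orient_add_smul a b c d hst] at h
  set x := orient a b c
  set y := orient a b d
  have hx : x = 0 := by
    have hxx : s * (x * x) + t * (x * y) = 0 := by linear_combination x * h
    have hxx' : x * x ≤ 0 :=
      le_of_not_gt fun hpos => by nlinarith [mul_pos hs hpos, mul_nonneg ht.le hmul]
    exact mul_self_eq_zero.mp (le_antisymm hxx' (mul_self_nonneg x))
  have hy : y = 0 := by simpa [hx, ht.ne'] using h
  exact hadd (by rw [hx, hy, add_zero])

theorem subsingleton_openSegment_inter {a b c d : ℝ × ℝ} (h : orient a b c ≠ orient a b d) :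
    (openSegment ℝ a b ∩ openSegment ℝ c d).Subsingleton := by
  rintro z ⟨hab, hcd⟩ z' ⟨hab', hcd'⟩
  have e₁ := orient_eq_zero_of_mem_openSegment hab
  have e₂ := orient_eq_zero_of_mem_openSegment hcd
  have e₁' := orient_eq_zero_of_mem_openSegment hab'
  have e₂' := orient_eq_zero_of_mem_openSegment hcd'
  have hD : orient a b d - orient a b c ≠ 0 := sub_ne_zero.mpr h.symm
  simp only [orient] at e₁ e₂ e₁' e₂'
  refine Prod.ext (mul_right_cancel₀ hD ?_) (mul_right_cancel₀ hD ?_)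
  · simp only [orient]
    linear_combination (d.1 - c.1) * (e₁ - e₁') - (b.1 - a.1) * (e₂ - e₂')
  · simp only [orient]
    linear_combination (d.2 - c.2) * (e₁ - e₁') - (b.2 - a.2) * (e₂ - e₂')

def toRealPoint (z : ℤ × ℤ) : ℝ × ℝ := (z.1, z.2)

theorem toRealPoint_injective : Injective toRealPoint := fun z z' h => by
  simpa [toRealPoint, Prod.ext_iff] using h

theorem orient_toRealPoint (a b c : ℤ × ℤ) :
    orient (toRealPoint a) (toRealPoint b) (toRealPoint c) = orient a b c := by
  simp [orient, toRealPoint]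

/-- The open segment `cd` lies in one closed half-plane of the line `ab` without lying on it. -/
def AvoidsLine (a b c d : ℤ × ℤ) : Prop :=
  0 ≤ orient a b c * orient a b d ∧ orient a b c + orient a b d ≠ 0

instance (a b c d : ℤ × ℤ) : Decidable (AvoidsLine a b c d) :=
  inferInstanceAs (Decidable (_ ∧ _))

theorem AvoidsLine.disjoint {a b c d : ℤ × ℤ} (h : AvoidsLine a b c d) :
    Disjoint (openSegment ℝ (toRealPoint a) (toRealPoint b))
      (openSegment ℝ (toRealPoint c) (toRealPoint d)) := by
  refine disjoint_openSegment_of_orient ?_ ?_ <;> simp only [orient_toRealPoint]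
  · exact_mod_cast h.1
  · exact_mod_cast h.2

def basePoint : Fin 24 → ℤ × ℤ :=
  ![(0, 0), (13816, 6232), (15845, 7933), (13832, 7610), (21054, 8629), (30021, 10005),
    (18339, 8292), (30024, 19977), (17949, 8751), (21015, 12451), (17945, 9207), (18342, 9978),
    (22059, 9972), (25119, 11371), (20437, 9627), (25122, 13786), (19689, 9674), (22098, 12046),
    (19704, 10021), (20433, 10847), (21623, 10371), (23420, 11656), (20623, 10337), (21670, 11186)]

def baseEdgeList : List (Fin 24 × Fin 24) :=
  [(1, 0), (1, 2), (1, 4), (1, 6), (0, 3), (0, 5), (0, 7), (2, 3), (2, 8), (2, 10), (3, 9), (3, 11),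
   (4, 5), (4, 6), (4, 12), (5, 7), (5, 13), (6, 8), (6, 14), (7, 9), (7, 15), (8, 10), (8, 16),
   (9, 11), (9, 17), (10, 11), (10, 18), (11, 19), (12, 13), (12, 14), (12, 20), (13, 15),
   (13, 21), (14, 16), (14, 20), (15, 17), (15, 21), (16, 18), (16, 22), (17, 19), (17, 23),
   (18, 19), (18, 22), (19, 23), (20, 21), (20, 22), (21, 23), (22, 23), (16, 20), (14, 22),
   (12, 5), (4, 13), (13, 7), (5, 15), (20, 13), (12, 21), (17, 21), (23, 15), (4, 14), (12, 6),
   (10, 3), (2, 11), (1, 5), (0, 4), (8, 14), (16, 6), (18, 11), (10, 19), (20, 23), (21, 22),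
   (8, 18), (16, 10), (1, 8), (2, 6), (18, 23), (19, 22), (19, 9), (17, 11), (1, 3), (0, 2),
   (0, 9), (3, 7), (9, 15), (17, 7)]

/-- Vertex `0` of the data becomes the shared vertex `none`. -/
def basePos (v : Option (Fin 23)) : ℤ × ℤ := basePoint ((finSuccEquiv 23).symm v)

def baseEdges : List (Option (Fin 23) × Option (Fin 23)) :=
  baseEdgeList.map (Prod.map (finSuccEquiv 23) (finSuccEquiv 23))

def baseGraph : SimpleGraph (Option (Fin 23)) := fromRel fun u v => (u, v) ∈ baseEdges

instance : DecidableRel baseGraph.Adj := fun u v => inferInstanceAs (Decidable (u ≠ v ∧ _))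

/-- The only edge whose segment may cross that of `e`, as `baseEdges_avoidsLine_or_mate`
certifies. -/
def baseMate (e : Option (Fin 23) × Option (Fin 23)) :
    Option (Option (Fin 23) × Option (Fin 23)) :=
  baseEdges.find? fun f => decide (e ≠ f ∧
    ¬ AvoidsLine (basePos e.1) (basePos e.2) (basePos f.1) (basePos f.2) ∧
    ¬ AvoidsLine (basePos f.1) (basePos f.2) (basePos e.1) (basePos e.2))

theorem basePos_injective : Injective basePos := by decide +kernel

theorem basePos_none : basePos none = 0 := by decide +kernel

theorem basePos_some_bounds :
    ∀ b, 0 < (basePos (some b)).2 ∧ (basePos (some b)).2 < (basePos (some b)).1 := by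
  decide +kernel

theorem baseEdges_fst_ne_snd : ∀ e ∈ baseEdges, e.1 ≠ e.2 := by decide +kernel

theorem baseGraph_degree : ∀ v, baseGraph.degree v = 7 := by decide +kernel

theorem baseEdges_orient_ne_zero : ∀ e ∈ baseEdges, ∀ w, w = e.1 ∨ w = e.2 ∨
    orient (basePos e.1) (basePos e.2) (basePos w) ≠ 0 := by
  decide +kernel

theorem baseEdges_avoidsLine_or_mate : ∀ e ∈ baseEdges, ∀ f ∈ baseEdges, e = f ∨
    AvoidsLine (basePos e.1) (basePos e.2) (basePos f.1) (basePos f.2) ∨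
    AvoidsLine (basePos f.1) (basePos f.2) (basePos e.1) (basePos e.2) ∨
    (baseMate e = some f ∧
      orient (basePos e.1) (basePos e.2) (basePos f.1) ≠
        orient (basePos e.1) (basePos e.2) (basePos f.2)) := by
  decide +kernel

theorem mem_edgeSet_baseGraph {e : Sym2 (Option (Fin 23))} :
    e ∈ baseGraph.edgeSet ↔ ∃ f ∈ baseEdges, s(f.1, f.2) = e := by
  induction e using Sym2.ind with
  | _ u v =>
    simp only [baseGraph, mem_edgeSet, fromRel_adj]
    constructor
    · rintro ⟨-, h | h⟩
      exacts [⟨_, h, rfl⟩, ⟨_, h, Sym2.eq_swap⟩]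
    · rintro ⟨f, hf, he⟩
      rcases Sym2.eq_iff.mp he with ⟨rfl, rfl⟩ | ⟨rfl, rfl⟩
      exacts [⟨baseEdges_fst_ne_snd f hf, Or.inl hf⟩,
        ⟨(baseEdges_fst_ne_snd f hf).symm, Or.inr hf⟩]

theorem card_neighborSet_baseGraph (v : Option (Fin 23)) :
    Nat.card (baseGraph.neighborSet v) = 7 := by
  rw [Nat.card_eq_fintype_card, card_neighborSet_eq_degree, baseGraph_degree]

theorem baseGraph_isStraightLineOnePlanar :
    baseGraph.IsStraightLineOnePlanar (toRealPoint ∘ basePos) := by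
  refine ⟨toRealPoint_injective.comp basePos_injective, ?_, ?_⟩
  · intro _ he w hw
    obtain ⟨⟨a, b⟩, hab, rfl⟩ := mem_edgeSet_baseGraph.mp he
    simp only [edgeSegment_mk, comp_apply] at hw
    have hne : toRealPoint (basePos a) ≠ toRealPoint (basePos b) :=
      (toRealPoint_injective.comp basePos_injective).ne (baseEdges_fst_ne_snd _ hab)
    rcases baseEdges_orient_ne_zero _ hab w with rfl | rfl | horient
    · exact hne (left_mem_openSegment_iff.mp hw)
    · exact hne (right_mem_openSegment_iff.mp hw)
    · have := orient_eq_zero_of_mem_openSegment hw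
      rw [orient_toRealPoint] at this
      exact horient (by exact_mod_cast this)
  · intro _ he
    obtain ⟨⟨a, b⟩, hab, rfl⟩ := mem_edgeSet_baseGraph.mp he
    have hmate : ∀ z ∈ baseGraph.crossings (toRealPoint ∘ basePos) s(a, b), ∃ f,
        baseMate (a, b) = some f ∧
        z ∈ openSegment ℝ (toRealPoint (basePos a)) (toRealPoint (basePos b)) ∩
          openSegment ℝ (toRealPoint (basePos f.1)) (toRealPoint (basePos f.2)) ∧
        orient (toRealPoint (basePos a)) (toRealPoint (basePos b)) (toRealPoint (basePos f.1)) ≠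
          orient (toRealPoint (basePos a)) (toRealPoint (basePos b))
            (toRealPoint (basePos f.2)) := by
      rintro z ⟨_, hf, hfe, hze, hzf⟩
      obtain ⟨⟨c, d⟩, hcd, rfl⟩ := mem_edgeSet_baseGraph.mp hf
      rcases baseEdges_avoidsLine_or_mate _ hab _ hcd with h | h | h | ⟨hmate, hpar⟩
      · obtain ⟨rfl, rfl⟩ := Prod.mk.inj h
        exact absurd rfl hfe
      · exact absurd hzf (Set.disjoint_left.mp h.disjoint hze)
      · exact absurd hze (Set.disjoint_left.mp h.disjoint hzf)
      · refine ⟨_, hmate, ⟨hze, hzf⟩, ?_⟩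
        simp only [orient_toRealPoint]
        exact_mod_cast hpar
    intro z hz z' hz'
    obtain ⟨f, hf, hzf, hpar⟩ := hmate z hz
    obtain ⟨f', hf', hzf', -⟩ := hmate z' hz'
    obtain rfl : f = f' := Option.some_injective _ (hf.symm.trans hf')
    exact subsingleton_openSegment_inter hpar hzf hzf'

theorem isStraightLineOnePlanar_wedge_baseGraph (k : ℕ) :
    (baseGraph.wedge (Fin k)).IsStraightLineOnePlanar
      (wedgePos (toRealPoint ∘ basePos) fun i => (i : ℤ)) :=
  baseGraph_isStraightLineOnePlanar.wedge (by simp [basePos_none, toRealPoint])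
    (fun b => by simpa [cone, toRealPoint] using basePos_some_bounds b)
    fun i j h => Fin.ext (by exact_mod_cast h)

theorem stmt19 (N : ℕ) :
    ∃ (n : ℕ) (G : SimpleGraph (Fin n)),
      OnePlanar G ∧
      (∀ v, 7 ≤ Nat.card (G.neighborSet v)) ∧
      (∃ v, Nat.card (G.neighborSet v) = 7) ∧
      N ≤ n ∧
      ∀ M : G.Subgraph, M.IsMatching → (M.edgeSet.ncard : ℚ) ≤ (11 * (n : ℚ) + 12) / 23 := by
  let W := baseGraph.wedge (Fin (N + 1))
  have hcard : Fintype.card (Option (Fin (N + 1) × Fin 23)) = 23 * (N + 1) + 1 := by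
    simp [mul_comm]
  let φ := W.overFinIso hcard
  refine ⟨_, W.overFin hcard, (isStraightLineOnePlanar_wedge_baseGraph _).onePlanar.map_iso φ,
    fun v => ?_, ⟨φ (some (0, 0)), ?_⟩, by omega, fun M hM => ?_⟩
  · rw [← φ.apply_symm_apply v, φ.card_neighborSet]
    rcases φ.symm v with _ | ⟨i, b⟩
    · exact (card_neighborSet_baseGraph none).ge.trans (card_neighborSet_le_wedge_none 0)
    · rw [card_neighborSet_wedge_some, card_neighborSet_baseGraph]
  · rw [φ.card_neighborSet, card_neighborSet_wedge_some, card_neighborSet_baseGraph]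
  · have hbound := ncard_edgeSet_le_of_isMatching_wedge
      ((Subgraph.Iso.isMatching_map φ.symm).mpr hM)
    rw [φ.symm.ncard_edgeSet_map, Fintype.card_fin, Fintype.card_fin] at hbound
    have : (M.edgeSet.ncard : ℚ) ≤ 1 + (N + 1) * 11 := by exact_mod_cast hbound
    rw [le_div_iff₀ (by norm_num)]
    push_cast
    linarith
end
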